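/- arXiv:2007.11624 — 6 statements merged into one kernel-verified Lean document; each statement's English description precedes it below -/
import Mathlib

section
/- Let W be a unitary operator on a finite-dimensional complex Hilbert space, let Π be an orthogonal projection (Π = Π*, Π² = Π), and set R = 2Π − 1. Then Π(−W R W* R W)Π = 3 (Π W Π) − 4 (Π W Π)(Π W* Π)(Π W Π). -/
open Matrix
open scoped Matrix.Norms.L2Operator

/-!
Write `R = 2P - 1`. Since `P` is idempotent, `P R = P`, and conjugating `R` by a unitary `U`
gives the reflection `2 U P U⋆ - 1`, and likewise `U⋆ R U = 2 U⋆ P U - 1`. Grouping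
`U R U⋆ R U` as `(U R U⋆) R U` and then `U (U⋆ R U)` collapses the sandwich `P (U R U⋆ R U) P`
to `4 PUPU⋆PUP - 3 PUP`; finally `PUPU⋆PUP = (PUP)(PU⋆P)(PUP)` because `P² = P`.
-/

section Ring

variable {A : Type*} [Ring A]

theorem IsIdempotentElem.mul_two_mul_sub_one {P : A} (hP : IsIdempotentElem P) :
    P * (2 * P - 1) = P := by
  calc P * (2 * P - 1) = 2 * (P * P) - P := by noncomm_ring
    _ = P := by rw [hP.eq]; noncomm_ring

theorem IsIdempotentElem.compress_mul_compress_mul_compress {P : A} (hP : IsIdempotentElem P)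
    (a b c : A) :
    P * a * P * (P * b * P) * (P * c * P) = P * a * P * b * P * c * P := by
  have hxP : ∀ x, x * P * P = x * P := fun x => by rw [mul_assoc, hP.eq]
  simp only [← mul_assoc, hxP]

end Ring

section Unitary

variable {A : Type*} [Ring A] [StarMul A]

theorem Unitary.mul_two_mul_sub_one_mul_star {U : A} (hU : U ∈ unitary A) (P : A) :
    U * (2 * P - 1) * star U = 2 * (U * P * star U) - 1 := by
  calc U * (2 * P - 1) * star U = 2 * (U * P * star U) - U * star U := by noncomm_ring
    _ = 2 * (U * P * star U) - 1 := by rw [Unitary.mul_star_self_of_mem hU]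

theorem oblivious_amplitude_amplification {P U : A} (hP : IsIdempotentElem P)
    (hU : U ∈ unitary A) :
    P * -(U * (2 * P - 1) * star U * (2 * P - 1) * U) * P =
      3 * (P * U * P) - 4 * (P * U * P * (P * star U * P) * (P * U * P)) := by
  have hstar_conj : star U * (2 * P - 1) * U = 2 * (star U * P * U) - 1 := by
    simpa using Unitary.mul_two_mul_sub_one_mul_star (Unitary.star_mem hU) P
  calc P * -(U * (2 * P - 1) * star U * (2 * P - 1) * U) * P
      = -(P * (U * (2 * P - 1) * star U) * (2 * P - 1) * U * P) := by noncomm_ring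
    _ = -(2 * (P * U * P * (star U * (2 * P - 1) * U) * P) - P * (2 * P - 1) * U * P) := by
        rw [Unitary.mul_two_mul_sub_one_mul_star hU]; noncomm_ring
    _ = -(2 * (2 * (P * U * P * star U * P * U * P) - P * U * (P * P)) - P * U * P) := by
        rw [hstar_conj, hP.mul_two_mul_sub_one]; noncomm_ring
    _ = 3 * (P * U * P) - 4 * (P * U * P * (P * star U * P) * (P * U * P)) := by
        rw [hP.eq, hP.compress_mul_compress_mul_compress]; noncomm_ring

end Unitary

theorem amplitude_amplification_identity_general (d : ℕ)
    (W P : Matrix (Fin d) (Fin d) ℂ)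
    (hW : W ∈ Matrix.unitaryGroup (Fin d) ℂ)
    (hP_idem : P * P = P) :
    P * (-(W * ((2 : ℂ) • P - 1) * Wᴴ * ((2 : ℂ) • P - 1) * W)) * P =
      (3 : ℂ) • (P * W * P) -
        (4 : ℂ) • ((P * W * P) * (P * Wᴴ * P) * (P * W * P)) := by
  simp only [ofNat_smul_eq_nsmul, nsmul_eq_mul, Nat.cast_ofNat, ← star_eq_conjTranspose]
  exact oblivious_amplitude_amplification hP_idem hW

/-- **Oblivious amplitude amplification identity.**
If `W` is a unitary operator on a finite-dimensional complex Hilbert space (modelled as a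
`d × d` complex matrix acting on `ℂ^d`), `Π` is an orthogonal projection (`Π = Π*`, `Π² = Π`)
and `R = 2Π − 1`, then `Π(−W R W* R W)Π = 3 (ΠWΠ) − 4 (ΠWΠ)(ΠW*Π)(ΠWΠ)`. -/
theorem amplitude_amplification_identity (d : ℕ)
    (W P : Matrix (Fin d) (Fin d) ℂ)
    (hW : W ∈ Matrix.unitaryGroup (Fin d) ℂ)
    (hP_adj : Pᴴ = P) (hP_idem : P * P = P) :
    P * (-(W * ((2 : ℂ) • P - 1) * Wᴴ * ((2 : ℂ) • P - 1) * W)) * P =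
      (3 : ℂ) • (P * W * P) -
        (4 : ℂ) • ((P * W * P) * (P * Wᴴ * P) * (P * W * P)) :=
  amplitude_amplification_identity_general d W P hW hP_idem
end

section
/- For every t ≥ 0, the generalized (term-truncated) Taylor approximation satisfies ‖exp(−itH) − U_{\vec{L}}(t)‖ ≤ e^{tΛ} − s_{\vec{L}}(t). In particular, at the step size t_∞ = log 2 / Λ (when Λ > 0), the error of the truncation is at most ε_{\vec{L}} := 2 − s_{\vec{L}}(t_∞). -/
open Matrix
open scoped Matrix.Norms.L2Operator

/-- The full Hamiltonian `H = Σ_{ℓ=0}^{L-1} α_ℓ h_ℓ` (and, for `m ≤ L`, the partially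
truncated Hamiltonian `Σ_{ℓ=0}^{m-1} α_ℓ h_ℓ` consisting of the `m` retained terms). -/
noncomputable def Hpart (d : ℕ) (h : ℕ → Matrix (Fin d) (Fin d) ℂ) (α : ℕ → ℝ) (m : ℕ) :
    Matrix (Fin d) (Fin d) ℂ :=
  ∑ ℓ ∈ Finset.range m, (α ℓ : ℂ) • h ℓ

/-- The generalized (term-truncated) Taylor operator
`U_{\vec L}(t) = I + Σ_{k=1}^∞ ((−it)^k/k!) ∏_{j=1}^k (Σ_{ℓ=0}^{L_j−1} α_ℓ h_ℓ)`. -/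
noncomputable def Utrunc (d : ℕ) (h : ℕ → Matrix (Fin d) (Fin d) ℂ) (α : ℕ → ℝ)
    (Lk : ℕ → ℕ) (t : ℝ) : Matrix (Fin d) (Fin d) ℂ :=
  1 + ∑' k : ℕ, ((-(t : ℂ) * Complex.I) ^ (k + 1) / (Nat.factorial (k + 1) : ℂ)) •
      ((List.range (k + 1)).map (fun j => Hpart d h α (Lk (j + 1)))).prod

/-- The scalar normalization series `s_{\vec L}(t) = Σ_{k=0}^∞ (t^k/k!) ∏_{j=1}^k Λ_j`,
where `Λ_j = Σ_{ℓ=0}^{L_j−1} α_ℓ`. -/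
noncomputable def strunc (α : ℕ → ℝ) (Lk : ℕ → ℕ) (t : ℝ) : ℝ :=
  ∑' k : ℕ, t ^ k / (Nat.factorial k : ℝ) *
      ∏ j ∈ Finset.range k, (∑ ℓ ∈ Finset.range (Lk (j + 1)), α ℓ)

/-! Unitarity of the `h ℓ` gives `‖H‖ ≤ Λ`, `‖H_j‖ ≤ Λ_j` and `‖H - H_j‖ ≤ Λ - Λ_j` for the
truncated Hamiltonians `H_j = Σ_{ℓ < L_j} α_ℓ h_ℓ`. Writing
`H^{k+1} - P_k H_{k+1} = (H^k - P_k) H + P_k (H - H_{k+1})` for `P_k = H_1 ⋯ H_k` shows by induction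
`‖H^k - P_k‖ ≤ Λ^k - Λ_1 ⋯ Λ_k`, so each term `((-it)^k/k!) (H^k - P_k)` of
`exp(-itH) - U(t)` is dominated by the term `(t^k/k!) (Λ^k - Λ_1 ⋯ Λ_k)` of `e^{tΛ} - s(t)`. -/

open Finset

section NormedRing

variable {R : Type*} [NormedRing R] [NormOneClass R]

theorem norm_list_prod_map_range_le {B : ℕ → R} {b : ℕ → ℝ} (hB : ∀ j, ‖B j‖ ≤ b j) (k : ℕ) :
    ‖((List.range k).map B).prod‖ ≤ ∏ j ∈ range k, b j := by
  induction k with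
  | zero => simp
  | succ k ih =>
    rw [List.prod_range_succ, prod_range_succ]
    exact (norm_mul_le _ _).trans <| mul_le_mul ih (hB k) (norm_nonneg _)
      (prod_nonneg fun j _ => (norm_nonneg _).trans (hB j))

theorem norm_pow_sub_list_prod_le {A : R} {a : ℝ} {B : ℕ → R} {b : ℕ → ℝ} (hA : ‖A‖ ≤ a)
    (hB : ∀ j, ‖B j‖ ≤ b j) (hAB : ∀ j, ‖A - B j‖ ≤ a - b j) (k : ℕ) :
    ‖A ^ k - ((List.range k).map B).prod‖ ≤ a ^ k - ∏ j ∈ range k, b j := by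
  induction k with
  | zero => simp
  | succ k ih =>
    set P := ((List.range k).map B).prod
    set p := ∏ j ∈ range k, b j
    have telescope : A ^ (k + 1) - P * B k = (A ^ k - P) * A + P * (A - B k) := by
      noncomm_ring
    rw [List.prod_range_succ, prod_range_succ, telescope]
    have hP : ‖P‖ ≤ p := norm_list_prod_map_range_le hB k
    calc ‖(A ^ k - P) * A + P * (A - B k)‖
        ≤ ‖A ^ k - P‖ * ‖A‖ + ‖P‖ * ‖A - B k‖ :=
          (norm_add_le _ _).trans (add_le_add (norm_mul_le _ _) (norm_mul_le _ _))
      _ ≤ (a ^ k - p) * a + p * (a - b k) := by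
          gcongr
          · exact (norm_nonneg _).trans ih
          · exact (norm_nonneg _).trans hP
          · exact hAB k
      _ = a ^ (k + 1) - p * b k := by ring

end NormedRing

section ExpSeries

variable {𝕂 E : Type*} [RCLike 𝕂]

theorem norm_pow_div_factorial (x : 𝕂) (n : ℕ) :
    ‖x ^ n / n.factorial‖ = ‖x‖ ^ n / n.factorial := by
  rw [norm_div, norm_pow, RCLike.norm_natCast]

theorem summable_pow_div_factorial_smul [NormedAddCommGroup E] [NormedSpace 𝕂 E]
    [CompleteSpace E] (x : 𝕂) {P : ℕ → E} {a : ℝ} (hP : ∀ n, ‖P n‖ ≤ a ^ n) :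
    Summable fun n => (x ^ n / n.factorial) • P n := by
  refine .of_norm_bounded (Real.summable_pow_div_factorial (‖x‖ * a)) fun n => ?_
  rw [norm_smul, norm_pow_div_factorial, mul_pow, mul_div_right_comm]
  exact mul_le_mul_of_nonneg_left (hP n) (by positivity)

theorem norm_exp_smul_sub_tsum_le [NormedRing E] [NormedAlgebra 𝕂 E] [CompleteSpace E]
    (x : 𝕂) {A : E} {a : ℝ} {P : ℕ → E} {p : ℕ → ℝ} (hP : ∀ n, ‖P n‖ ≤ p n)
    (hAP : ∀ n, ‖A ^ n - P n‖ ≤ a ^ n - p n) :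
    ‖NormedSpace.exp (x • A) - ∑' n, (x ^ n / n.factorial) • P n‖ ≤
      Real.exp (‖x‖ * a) - ∑' n, ‖x‖ ^ n / n.factorial * p n := by
  have hp_le : ∀ n, p n ≤ a ^ n := fun n => sub_nonneg.mp ((norm_nonneg _).trans (hAP n))
  have hAn : ∀ n, ‖A ^ n‖ ≤ a ^ n := fun n =>
    (norm_le_norm_add_norm_sub' _ (P n)).trans (by linarith [hP n, hAP n])
  have hexp : NormedSpace.exp (x • A) = ∑' n, (x ^ n / n.factorial) • A ^ n := by
    rw [NormedSpace.exp_eq_tsum 𝕂]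
    refine tsum_congr fun n => ?_
    rw [smul_pow, smul_smul, div_eq_inv_mul]
  have hrexp : Real.exp (‖x‖ * a) = ∑' n, ‖x‖ ^ n / n.factorial * a ^ n := by
    rw [Real.exp_eq_exp_ℝ, NormedSpace.exp_eq_tsum_div]
    exact tsum_congr fun n => by ring
  have hsum_a : Summable fun n => ‖x‖ ^ n / n.factorial * a ^ n := by
    simpa only [mul_pow, mul_div_right_comm] using Real.summable_pow_div_factorial (‖x‖ * a)
  have hsum_p : Summable fun n => ‖x‖ ^ n / n.factorial * p n :=
    hsum_a.of_nonneg_of_le (fun n => mul_nonneg (by positivity) ((norm_nonneg _).trans (hP n)))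
      fun n => mul_le_mul_of_nonneg_left (hp_le n) (by positivity)
  have hterm : ∀ n, ‖(x ^ n / n.factorial) • (A ^ n - P n)‖ ≤
      ‖x‖ ^ n / n.factorial * a ^ n - ‖x‖ ^ n / n.factorial * p n := fun n => by
    rw [norm_smul, norm_pow_div_factorial, ← mul_sub]
    exact mul_le_mul_of_nonneg_left (hAP n) (by positivity)
  rw [hexp, hrexp, ← (summable_pow_div_factorial_smul x hAn).tsum_sub
    (summable_pow_div_factorial_smul x fun n => (hP n).trans (hp_le n)),
    ← hsum_a.tsum_sub hsum_p]
  simp only [← smul_sub]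
  have hsum_diff := hsum_a.sub hsum_p
  have hsum_norm := hsum_diff.of_nonneg_of_le (fun _ => norm_nonneg _) hterm
  exact (norm_tsum_le_tsum_norm hsum_norm).trans (Summable.tsum_le_tsum hterm hsum_norm hsum_diff)

end ExpSeries

section Hamiltonian

variable {d L : ℕ} {h : ℕ → Matrix (Fin d) (Fin d) ℂ} {α : ℕ → ℝ}

theorem norm_sum_smul_le_sum {E : Type*} [SeminormedAddCommGroup E] [NormedSpace ℂ E]
    (s : Finset ℕ) {u : ℕ → E} (hu : ∀ ℓ ∈ s, ‖u ℓ‖ ≤ 1) (hα : ∀ ℓ ∈ s, 0 ≤ α ℓ) :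
    ‖∑ ℓ ∈ s, (α ℓ : ℂ) • u ℓ‖ ≤ ∑ ℓ ∈ s, α ℓ := by
  refine (norm_sum_le _ _).trans (sum_le_sum fun ℓ hℓ => ?_)
  rw [norm_smul, Complex.norm_real, Real.norm_of_nonneg (hα ℓ hℓ)]
  exact mul_le_of_le_one_right (hα ℓ hℓ) (hu ℓ hℓ)

variable [Nonempty (Fin d)] (hunit : ∀ ℓ < L, h ℓ ∈ Matrix.unitaryGroup (Fin d) ℂ)
  (hα : ∀ ℓ < L, 0 ≤ α ℓ)
include hunit hα

theorem norm_sum_smul_unitary_le {s : Finset ℕ} (hs : ∀ ℓ ∈ s, ℓ < L) :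
    ‖∑ ℓ ∈ s, (α ℓ : ℂ) • h ℓ‖ ≤ ∑ ℓ ∈ s, α ℓ :=
  norm_sum_smul_le_sum s (fun ℓ hℓ => (CStarRing.norm_of_mem_unitary (hunit ℓ (hs ℓ hℓ))).le)
    fun ℓ hℓ => hα ℓ (hs ℓ hℓ)

theorem norm_Hpart_le {m : ℕ} (hm : m ≤ L) : ‖Hpart d h α m‖ ≤ ∑ ℓ ∈ range m, α ℓ :=
  norm_sum_smul_unitary_le hunit hα fun _ hℓ => (mem_range.mp hℓ).trans_le hm

theorem norm_Hpart_sub_Hpart_le {m n : ℕ} (hmn : m ≤ n) (hn : n ≤ L) :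
    ‖Hpart d h α n - Hpart d h α m‖ ≤ ∑ ℓ ∈ range n, α ℓ - ∑ ℓ ∈ range m, α ℓ := by
  rw [Hpart, Hpart, ← sum_range_add_sum_Ico _ hmn, ← sum_range_add_sum_Ico _ hmn,
    add_sub_cancel_left, add_sub_cancel_left]
  exact norm_sum_smul_unitary_le hunit hα fun _ hℓ => (mem_Ico.mp hℓ).2.trans_le hn

theorem norm_exp_sub_Utrunc_le {Lk : ℕ → ℕ} (hLk : ∀ k, Lk k ≤ L) {t : ℝ} (ht : 0 ≤ t) :
    ‖NormedSpace.exp ((-(t : ℂ) * Complex.I) • Hpart d h α L) - Utrunc d h α Lk t‖ ≤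
      Real.exp (t * ∑ ℓ ∈ range L, α ℓ) - strunc α Lk t := by
  set x : ℂ := -(t : ℂ) * Complex.I
  set P : ℕ → Matrix (Fin d) (Fin d) ℂ := fun n =>
    ((List.range n).map fun j => Hpart d h α (Lk (j + 1))).prod
  have hB : ∀ j, ‖Hpart d h α (Lk (j + 1))‖ ≤ ∑ ℓ ∈ range (Lk (j + 1)), α ℓ := fun j =>
    norm_Hpart_le hunit hα (hLk _)
  have hP : ∀ n, ‖P n‖ ≤ ∏ j ∈ range n, ∑ ℓ ∈ range (Lk (j + 1)), α ℓ :=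
    norm_list_prod_map_range_le hB
  have hAP := norm_pow_sub_list_prod_le (norm_Hpart_le hunit hα le_rfl) hB
    fun j => norm_Hpart_sub_Hpart_le hunit hα (hLk _) le_rfl
  have hP_pow : ∀ n, ‖P n‖ ≤ (∑ ℓ ∈ range L, α ℓ) ^ n := fun n =>
    (hP n).trans (sub_nonneg.mp ((norm_nonneg _).trans (hAP n)))
  have hU : Utrunc d h α Lk t = ∑' n, (x ^ n / n.factorial) • P n := by
    rw [(summable_pow_div_factorial_smul x hP_pow).tsum_eq_zero_add]
    simp [Utrunc, x, P]
  have hx : ‖x‖ = t := by simp [x, abs_of_nonneg ht]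
  rw [hU, strunc]
  simpa only [hx] using norm_exp_smul_sub_tsum_le x hP hAP

end Hamiltonian

theorem generalized_truncation_error_bound_general (d L : ℕ) (hd : 1 ≤ d)
    (h : ℕ → Matrix (Fin d) (Fin d) ℂ) (α : ℕ → ℝ)
    (hunit : ∀ ℓ < L, h ℓ ∈ Matrix.unitaryGroup (Fin d) ℂ)
    (hα : ∀ ℓ < L, 0 ≤ α ℓ)
    (Lk : ℕ → ℕ) (hLk : ∀ k, Lk k ≤ L) :
    (∀ t : ℝ, 0 ≤ t →
      ‖NormedSpace.exp ((-(t : ℂ) * Complex.I) • Hpart d h α L) -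
          Utrunc d h α Lk t‖ ≤
        Real.exp (t * ∑ ℓ ∈ Finset.range L, α ℓ) - strunc α Lk t) ∧
    (0 < ∑ ℓ ∈ Finset.range L, α ℓ →
      ‖NormedSpace.exp
            ((-(Real.log 2 / ∑ ℓ ∈ Finset.range L, α ℓ : ℝ) * Complex.I) • Hpart d h α L) -
          Utrunc d h α Lk (Real.log 2 / ∑ ℓ ∈ Finset.range L, α ℓ)‖ ≤
        2 - strunc α Lk (Real.log 2 / ∑ ℓ ∈ Finset.range L, α ℓ)) := by
  have : Nonempty (Fin d) := ⟨⟨0, hd⟩⟩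
  refine ⟨fun t ht => norm_exp_sub_Utrunc_le hunit hα hLk ht, fun hΛ => ?_⟩
  have := norm_exp_sub_Utrunc_le hunit hα hLk (div_nonneg (Real.log_nonneg one_le_two) hΛ.le)
  rwa [div_mul_cancel₀ _ hΛ.ne', Real.exp_log two_pos] at this

/-- **Error bound for the generalized truncated Taylor expansion.** For every `t ≥ 0`,
`‖exp(−itH) − U_{\vec L}(t)‖ ≤ e^{tΛ} − s_{\vec L}(t)`; in particular, when `Λ > 0`, at the
step size `t_∞ = log 2 / Λ` the error is at most `ε_{\vec L} = 2 − s_{\vec L}(t_∞)`. -/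
theorem generalized_truncation_error_bound (d L : ℕ) (hd : 1 ≤ d) (hL : 1 ≤ L)
    (h : ℕ → Matrix (Fin d) (Fin d) ℂ) (α : ℕ → ℝ)
    (hunit : ∀ ℓ < L, h ℓ ∈ Matrix.unitaryGroup (Fin d) ℂ)
    (hα : ∀ ℓ < L, 0 ≤ α ℓ)
    (Lk : ℕ → ℕ) (hLk : ∀ k, Lk k ≤ L) :
    (∀ t : ℝ, 0 ≤ t →
      ‖NormedSpace.exp ((-(t : ℂ) * Complex.I) • Hpart d h α L) -
          Utrunc d h α Lk t‖ ≤
        Real.exp (t * ∑ ℓ ∈ Finset.range L, α ℓ) - strunc α Lk t) ∧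
    (0 < ∑ ℓ ∈ Finset.range L, α ℓ →
      ‖NormedSpace.exp
            ((-(Real.log 2 / ∑ ℓ ∈ Finset.range L, α ℓ : ℝ) * Complex.I) • Hpart d h α L) -
          Utrunc d h α Lk (Real.log 2 / ∑ ℓ ∈ Finset.range L, α ℓ)‖ ≤
        2 - strunc α Lk (Real.log 2 / ∑ ℓ ∈ Finset.range L, α ℓ)) :=
  generalized_truncation_error_bound_general d L hd h α hunit hα Lk hLk
end

section
/- Let U be a unitary d×d complex matrix and Ũ any d×d complex matrix with ‖Ũ − U‖ ≤ ε for some 0 ≤ ε ≤ 1/2. Put s = 2 − ε and define Ã = (3/s) Ũ − (4/s³) Ũ Ũ* Ũ. Then ‖Ã − U‖ ≤ ε + 8ε². -/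
open Matrix
open scoped Matrix.Norms.L2Operator

/-!
Write `Ũ = U (1 + F)` with `F = U* (Ũ - U)`, so that `‖F‖ = ‖Ũ - U‖ ≤ ε`. Then
`Ã - U = U ((a - b - 1) + (a - 2b) F - b R)` with `a = 3/s`, `b = 4/s³` and
`R = F* + F F* + F² + F* F + F F* F`, `‖R‖ ≤ ε + 3ε² + ε³`. For `s = 2 - ε` the constant
coefficient is `a - b - 1 = -ε² (3 - ε)/s³`, of second order, and what remains is a polynomial
inequality in `ε ∈ [0, 1/2]`.
-/

section StarRing

variable {A : Type*} [Ring A] [StarRing A]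

lemma eq_mul_one_add_star_mul_sub {u : A} (hu : u ∈ unitary A) (x : A) :
    x = u * (1 + star u * (x - u)) := by
  rw [mul_add, mul_one, ← mul_assoc, Unitary.mul_star_self_of_mem hu, one_mul, add_sub_cancel]

lemma mul_mul_star_mul_of_mem_unitary {u : A} (hu : u ∈ unitary A) (y : A) :
    u * y * star (u * y) * (u * y) = u * (y * star y * y) := by
  simp only [star_mul, mul_assoc]
  rw [← mul_assoc (star u) u y, Unitary.star_mul_self_of_mem hu, one_mul]

lemma one_add_mul_star_mul_one_add (F : A) :
    (1 + F) * star (1 + F) * (1 + F) =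
      1 + 2 * F + (star F + F * star F + F * F + star F * F + F * star F * F) := by
  rw [star_add, star_one]; noncomm_ring

lemma smul_sub_smul_mul_star_mul_sub_eq [Algebra ℂ A] {u : A} (hu : u ∈ unitary A) (a b : ℂ)
    (F : A) :
    a • (u * (1 + F)) - b • (u * (1 + F) * star (u * (1 + F)) * (u * (1 + F))) - u =
      u * ((a - b - 1) • 1 + (a - 2 * b) • F -
        b • (star F + F * star F + F * F + star F * F + F * star F * F)) := by
  rw [mul_mul_star_mul_of_mem_unitary hu, one_add_mul_star_mul_one_add]
  simp only [mul_add, mul_sub, mul_smul_comm, mul_one, two_mul]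
  module

end StarRing

lemma norm_star_add_mul_star_add_le {A : Type*} [NonUnitalNormedRing A] [StarRing A]
    [NormedStarGroup A] {F : A} {ε : ℝ} (hF : ‖F‖ ≤ ε) :
    ‖star F + F * star F + F * F + star F * F + F * star F * F‖ ≤ ε + 3 * ε ^ 2 + ε ^ 3 := by
  have hε : 0 ≤ ε := (norm_nonneg F).trans hF
  have hF' : ‖star F‖ ≤ ε := (norm_star F).trans_le hF
  have hmul {X Y : A} (hX : ‖X‖ ≤ ε) (hY : ‖Y‖ ≤ ε) : ‖X * Y‖ ≤ ε ^ 2 :=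
    (norm_mul_le X Y).trans (by rw [sq]; exact mul_le_mul hX hY (norm_nonneg Y) hε)
  have hcube : ‖F * star F * F‖ ≤ ε ^ 3 :=
    (norm_mul_le _ F).trans <| by
      rw [pow_succ]; exact mul_le_mul (hmul hF hF') hF (norm_nonneg F) (sq_nonneg ε)
  calc _ ≤ ‖star F + F * star F + F * F + star F * F‖ + ‖F * star F * F‖ := norm_add_le _ _
    _ ≤ ‖star F‖ + ‖F * star F‖ + ‖F * F‖ + ‖star F * F‖ + ‖F * star F * F‖ := by
      gcongr; exact norm_add₄_le
    _ ≤ ε + ε ^ 2 + ε ^ 2 + ε ^ 2 + ε ^ 3 := by gcongr <;> exact hmul ‹_› ‹_›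
    _ = ε + 3 * ε ^ 2 + ε ^ 3 := by ring

section CStarRing

variable {A : Type*} [NormedRing A] [StarRing A] [CStarRing A]

lemma CStarRing.norm_one_le : ‖(1 : A)‖ ≤ 1 := by
  rcases subsingleton_or_nontrivial A with _ | _
  · simp [Subsingleton.elim (1 : A) 0]
  · exact CStarRing.norm_one.le

theorem norm_smul_sub_smul_mul_star_mul_sub_le [NormedAlgebra ℂ A] {u x : A}
    (hu : u ∈ unitary A) (a b : ℂ) {ε : ℝ} (hx : ‖x - u‖ ≤ ε) :
    ‖a • x - b • (x * star x * x) - u‖ ≤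
      ‖a - b - 1‖ + ‖a - 2 * b‖ * ε + ‖b‖ * (ε + 3 * ε ^ 2 + ε ^ 3) := by
  set F := star u * (x - u)
  have hF : ‖F‖ ≤ ε := (CStarRing.norm_mem_unitary_mul _ (Unitary.star_mem hu)).trans_le hx
  rw [eq_mul_one_add_star_mul_sub hu x, smul_sub_smul_mul_star_mul_sub_eq hu,
    CStarRing.norm_mem_unitary_mul _ hu]
  calc _ ≤ ‖(a - b - 1) • (1 : A)‖ + ‖(a - 2 * b) • F‖ +
        ‖b • (star F + F * star F + F * F + star F * F + F * star F * F)‖ :=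
          norm_sub_le_of_le (norm_add_le _ _) le_rfl
    _ ≤ _ := by
      simp only [norm_smul]
      gcongr
      · exact mul_le_of_le_one_right (norm_nonneg _) CStarRing.norm_one_le
      · exact norm_star_add_mul_star_add_le hF

end CStarRing

lemma amplification_coeff_bound {ε : ℝ} (hε0 : 0 ≤ ε) (hε : ε ≤ 1 / 2) :
    |3 / (2 - ε) - 4 / (2 - ε) ^ 3 - 1| + |3 / (2 - ε) - 2 * (4 / (2 - ε) ^ 3)| * ε +
      |4 / (2 - ε) ^ 3| * (ε + 3 * ε ^ 2 + ε ^ 3) ≤ ε + 8 * ε ^ 2 := by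
  have hs_ne : 2 - ε ≠ 0 := by linarith
  have hs : 0 < (2 - ε) ^ 3 := pow_pos (by linarith) 3
  have h0 : 3 / (2 - ε) - 4 / (2 - ε) ^ 3 - 1 = -((3 * ε ^ 2 - ε ^ 3) / (2 - ε) ^ 3) := by
    field_simp; ring
  have h1 : 3 / (2 - ε) - 2 * (4 / (2 - ε) ^ 3) = (4 - 12 * ε + 3 * ε ^ 2) / (2 - ε) ^ 3 := by
    field_simp; ring
  have h1_abs_le : |4 - 12 * ε + 3 * ε ^ 2| ≤ 4 := abs_le.2 ⟨by nlinarith, by nlinarith⟩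
  have h0_nonneg : 0 ≤ 3 * ε ^ 2 - ε ^ 3 := by nlinarith
  rw [h0, h1, abs_neg, abs_div, abs_div, abs_div, abs_of_pos hs, abs_of_nonneg h0_nonneg,
    abs_of_pos (four_pos : (0 : ℝ) < 4)]
  calc (3 * ε ^ 2 - ε ^ 3) / (2 - ε) ^ 3 + |4 - 12 * ε + 3 * ε ^ 2| / (2 - ε) ^ 3 * ε +
        4 / (2 - ε) ^ 3 * (ε + 3 * ε ^ 2 + ε ^ 3)
      ≤ (3 * ε ^ 2 - ε ^ 3) / (2 - ε) ^ 3 + 4 / (2 - ε) ^ 3 * ε +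
        4 / (2 - ε) ^ 3 * (ε + 3 * ε ^ 2 + ε ^ 3) := by gcongr
    _ = (8 * ε + 15 * ε ^ 2 + 3 * ε ^ 3) / (2 - ε) ^ 3 := by ring
    _ ≤ ε + 8 * ε ^ 2 := by
      rw [div_le_iff₀ hs]
      nlinarith [mul_nonneg (mul_nonneg hε0 hε0) (by linarith : (0 : ℝ) ≤ 1 / 2 - ε),
        mul_nonneg (mul_nonneg (mul_nonneg hε0 hε0) hε0) (by linarith : (0 : ℝ) ≤ 1 / 2 - ε)]

theorem amplified_operator_error_general (d : ℕ) (U Ut : Matrix (Fin d) (Fin d) ℂ)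
    (hU : U ∈ Matrix.unitaryGroup (Fin d) ℂ)
    (ε : ℝ) (hε : ε ≤ 1 / 2)
    (hUt : ‖Ut - U‖ ≤ ε) :
    ‖((3 / (2 - ε) : ℝ) : ℂ) • Ut -
        ((4 / (2 - ε) ^ 3 : ℝ) : ℂ) • (Ut * Utᴴ * Ut) - U‖ ≤ ε + 8 * ε ^ 2 := by
  calc _ ≤ _ := norm_smul_sub_smul_mul_star_mul_sub_le hU _ _ hUt
    _ = _ := by norm_cast
    _ ≤ ε + 8 * ε ^ 2 := amplification_coeff_bound ((norm_nonneg _).trans hUt) hε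

/-- **Error of one round of oblivious amplitude amplification.** If `U` is unitary,
`‖Ũ − U‖ ≤ ε` with `0 ≤ ε ≤ 1/2`, `s = 2 − ε`, and
`Ã = (3/s) Ũ − (4/s³) Ũ Ũ* Ũ`, then `‖Ã − U‖ ≤ ε + 8ε²`. -/
theorem amplified_operator_error (d : ℕ) (U Ut : Matrix (Fin d) (Fin d) ℂ)
    (hU : U ∈ Matrix.unitaryGroup (Fin d) ℂ)
    (ε : ℝ) (hε0 : 0 ≤ ε) (hε : ε ≤ 1 / 2)
    (hUt : ‖Ut - U‖ ≤ ε) :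
    ‖((3 / (2 - ε) : ℝ) : ℂ) • Ut -
        ((4 / (2 - ε) ^ 3 : ℝ) : ℂ) • (Ut * Utᴴ * Ut) - U‖ ≤ ε + 8 * ε ^ 2 :=
  amplified_operator_error_general d U Ut hU ε hε hUt
end

section
/- With ε_n := Σ_{k=n+1}^{∞} (log 2)^k / k!, for all sufficiently large n one has n < log(1/ε_n) and n · log(log(1/ε_n)) ≤ 2 · log(1/ε_n); that is, the expansion order needed to reach single-step error bound ε scales as O( log(1/ε) / log log(1/ε) ). -/
/-!
With `x = log 2 < 1`, the tail `ε_n` of the exponential series lies between its first term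
`b = x^(n+1)/(n+1)!` and the geometric bound `b/(1 - x)`. Since `0 ≤ log(1/x) ≤ 1` and
`m (log m - 1) ≤ log m! ≤ m log m`, this pins `L = log(1/ε_n)` between
`(n+1)(log(n+1) - 1) - 3` and `(n+1)(log(n+1) + 1)`. So `L` grows like `n log n` while
`log L ≤ (3/2) log(n+1) + 1/2`, and both inequalities follow once `log(n+1) ≥ 5`.
-/

/-- The single-step error bound at full expansion order `n`,
`ε_n = Σ_{k=n+1}^∞ (log 2)^k / k!`. -/
noncomputable def epsFull (n : ℕ) : ℝ :=
  ∑' k : ℕ, (Real.log 2) ^ (n + 1 + k) / (Nat.factorial (n + 1 + k) : ℝ)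

open Real
open scoped Nat

lemma Real.log_le_half_self {y : ℝ} (hy : 0 < y) : log y ≤ y / 2 := by
  have h := log_le_sub_one_of_pos (half_pos hy)
  rw [log_div hy.ne' two_ne_zero] at h
  linarith [log_two_lt_d9]

lemma Real.five_le_log_of_243_le {y : ℝ} (hy : 243 ≤ y) : 5 ≤ log y := by
  rw [le_log_iff_exp_le (by linarith)]
  calc exp 5 = exp 1 ^ 5 := by rw [← exp_nat_mul]; norm_num
    _ ≤ 3 ^ 5 := by gcongr; exact exp_one_lt_three.le
    _ ≤ y := by linarith

lemma mul_log_sub_one_le_log_factorial (m : ℕ) : m * (log m - 1) ≤ log (m ! : ℝ) := by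
  rcases m.eq_zero_or_pos with rfl | hm
  · simp
  have h := log_le_log (by positivity) (pow_div_factorial_le_exp (m : ℝ) (Nat.cast_nonneg m) m)
  rw [log_div (by positivity) (by positivity), log_pow, log_exp] at h
  linarith

lemma log_factorial_le_mul_log (m : ℕ) : log (m ! : ℝ) ≤ m * log m := by
  rw [← log_pow]
  exact log_le_log (by positivity) (mod_cast m.factorial_le_pow)

noncomputable def expTail (x : ℝ) (m : ℕ) : ℝ :=
  ∑' k : ℕ, x ^ (m + k) / (m + k)!

section expTail

variable {x : ℝ} (m : ℕ)

lemma summable_expTail : Summable fun k : ℕ => x ^ (m + k) / (m + k)! :=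
  (summable_pow_div_factorial x).comp_injective (add_right_injective m)

lemma pow_div_factorial_le_expTail (hx : 0 ≤ x) : x ^ m / m ! ≤ expTail x m := by
  simpa [expTail] using (summable_expTail m).le_tsum 0 fun k _ => by positivity

lemma expTail_le (hx0 : 0 ≤ x) (hx1 : x < 1) : expTail x m ≤ x ^ m / m ! / (1 - x) := by
  have hterm (k : ℕ) : x ^ (m + k) / (m + k)! ≤ x ^ m / m ! * x ^ k := by
    rw [pow_add, div_mul_eq_mul_div]
    gcongr
    exact m.le_add_right k
  calc expTail x m ≤ ∑' k : ℕ, x ^ m / m ! * x ^ k :=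
        (summable_expTail m).tsum_le_tsum hterm
          ((summable_geometric_of_lt_one hx0 hx1).mul_left _)
    _ = x ^ m / m ! / (1 - x) := by
        rw [tsum_mul_left, tsum_geometric_of_lt_one hx0 hx1, div_eq_mul_inv _ (1 - x)]

lemma log_inv_expTail_le (hx : 0 < x) :
    log (1 / expTail x m) ≤ log (m ! : ℝ) + m * log (1 / x) := by
  have hb : 0 < x ^ m / m ! := by positivity
  calc log (1 / expTail x m) ≤ log (1 / (x ^ m / m !)) :=
        log_le_log (by simpa using hb.trans_le (pow_div_factorial_le_expTail m hx.le))
          (one_div_le_one_div_of_le hb (pow_div_factorial_le_expTail m hx.le))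
    _ = log (m ! : ℝ) + m * log (1 / x) := by
        rw [one_div_div, log_div (by positivity) (by positivity), log_pow, one_div, log_inv]
        ring

lemma le_log_inv_expTail (hx0 : 0 < x) (hx1 : x < 1) :
    log (m ! : ℝ) + m * log (1 / x) + log (1 - x) ≤ log (1 / expTail x m) := by
  have hb : 0 < x ^ m / m ! := by positivity
  have hε : 0 < expTail x m := hb.trans_le (pow_div_factorial_le_expTail m hx0.le)
  calc log (m ! : ℝ) + m * log (1 / x) + log (1 - x) = log (1 / (x ^ m / m ! / (1 - x))) := by
        rw [one_div_div, one_div x, log_inv, log_div (by linarith) hb.ne',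
          log_div (by positivity) (by positivity), log_pow]
        ring
    _ ≤ log (1 / expTail x m) :=
        log_le_log (by positivity) (one_div_le_one_div_of_le hε (expTail_le m hx0.le hx1))

end expTail

lemma epsFull_eq_expTail (n : ℕ) : epsFull n = expTail (log 2) (n + 1) := rfl

lemma log_inv_epsFull_le (n : ℕ) :
    log (1 / epsFull n) ≤ (n + 1) * (log (n + 1) + 1) := by
  have hlog2 : log (1 / log 2) ≤ 1 := by
    have : 1 / log 2 ≤ 2 := by
      rw [div_le_iff₀ (log_pos one_lt_two)]; linarith [log_two_gt_d9]
    linarith [log_le_sub_one_of_pos (one_div_pos.2 (log_pos one_lt_two))]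
  have h := log_inv_expTail_le (n + 1) (log_pos one_lt_two)
  have hfac := log_factorial_le_mul_log (n + 1)
  push_cast at h hfac
  rw [epsFull_eq_expTail]
  calc _ ≤ log ((n + 1)! : ℝ) + (n + 1) * log (1 / log 2) := h
    _ ≤ (n + 1) * log (n + 1) + (n + 1) * 1 := by gcongr
    _ = (n + 1) * (log (n + 1) + 1) := by ring

lemma le_log_inv_epsFull (n : ℕ) :
    (n + 1) * (log (n + 1) - 1) - 3 ≤ log (1 / epsFull n) := by
  have hlog2 : 0 ≤ log (1 / log 2) :=
    log_nonneg (by rw [le_div_iff₀ (log_pos one_lt_two)]; linarith [log_two_lt_d9])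
  have hlog_one_sub : -3 ≤ log (1 - log 2) := by
    have : (1 - log 2)⁻¹ ≤ 4 := by
      rw [inv_le_comm₀ (by linarith [log_two_lt_d9]) (by norm_num)]; linarith [log_two_lt_d9]
    linarith [one_sub_inv_le_log_of_pos (x := 1 - log 2) (by linarith [log_two_lt_d9])]
  have h := le_log_inv_expTail (n + 1) (log_pos one_lt_two) (by linarith [log_two_lt_d9])
  have hfac := mul_log_sub_one_le_log_factorial (n + 1)
  push_cast at h hfac
  rw [epsFull_eq_expTail]
  calc (n + 1) * (log (n + 1) - 1) - 3 ≤ log ((n + 1)! : ℝ) + (n + 1) * 0 + -3 := by linarith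
    _ ≤ log ((n + 1)! : ℝ) + (n + 1) * log (1 / log 2) + log (1 - log 2) := by gcongr
    _ ≤ _ := h

/-- **Order scaling `n = O(log(1/ε)/log log(1/ε))`.** For all sufficiently large `n`,
`n < log(1/ε_n)` and `n · log(log(1/ε_n)) ≤ 2 · log(1/ε_n)`. -/
theorem order_vs_log_inv_eps :
    ∃ N : ℕ, ∀ n : ℕ, N ≤ n →
      (n : ℝ) < Real.log (1 / epsFull n) ∧
        (n : ℝ) * Real.log (Real.log (1 / epsFull n)) ≤ 2 * Real.log (1 / epsFull n) := by
  refine ⟨242, fun n hn => ?_⟩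
  have ht : 5 ≤ log (n + 1 : ℝ) := five_le_log_of_243_le (by norm_cast; omega)
  have hlow := le_log_inv_epsFull n
  have hup := log_inv_epsFull_le n
  set L := log (1 / epsFull n)
  set t := log (n + 1 : ℝ)
  have hn_lt : (n : ℝ) < L := by nlinarith
  have hlogL : log L ≤ t + (t + 1) / 2 :=
    calc log L ≤ log ((n + 1) * (t + 1)) := log_le_log (by linarith [n.cast_nonneg (α := ℝ)]) hup
      _ = t + log (t + 1) := log_mul (by positivity) (by linarith)
      _ ≤ t + (t + 1) / 2 := by linarith [log_le_half_self (y := t + 1) (by linarith)]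
  refine ⟨hn_lt, ?_⟩
  calc (n : ℝ) * log L ≤ n * (t + (t + 1) / 2) := by gcongr
    _ ≤ 2 * L := by nlinarith
end

section
/- Fix k ≥ 1 and let (L_j)_{j≥1} and (L'_j)_{j≥1} be sequences of natural numbers with L'_k = L_k + 1 and L'_j = L_j for j ≠ k, all bounded by L. Then for every t ≥ 0, s_{\vec{L}'}(t) − s_{\vec{L}}(t) = Σ_{ν=k}^{∞} (t^ν / ν!) · α_{L_k} · ∏_{j=1, j≠k}^{ν} Λ_j, where Λ_j = Σ_{ℓ=0}^{L_j−1} α_ℓ. -/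
/-- `Λ_j = Σ_{ℓ=0}^{L_j−1} α_ℓ`, the sum of the coefficients retained at order `j`. -/
noncomputable def ΛOf (α : ℕ → ℝ) (Lk : ℕ → ℕ) (j : ℕ) : ℝ :=
  ∑ ℓ ∈ Finset.range (Lk j), α ℓ

/-- `s_{\vec L}(t) = Σ_{ν=0}^∞ (t^ν/ν!) ∏_{j=1}^ν Λ_j`. -/
noncomputable def sVec (α : ℕ → ℝ) (Lk : ℕ → ℕ) (t : ℝ) : ℝ :=
  ∑' ν : ℕ, t ^ ν / (Nat.factorial ν : ℝ) * ∏ j ∈ Finset.Icc 1 ν, ΛOf α Lk j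

/-! Only the factor `Λ_k` changes, and it grows by `α_{L_k}`; so the `ν`-th terms of the two
series agree for `ν < k` and differ by `(t^ν/ν!) α_{L_k} ∏_{j ≠ k} Λ_j` for `ν ≥ k`. Both series
converge absolutely since `|Λ_j| ≤ Σ_{ℓ<L} |α_ℓ|`, so their difference may be taken termwise. -/

open Finset
open scoped Nat

theorem Finset.prod_sub_prod_of_eq_add {ι R : Type*} [DecidableEq ι] [CommRing R]
    {c c' : ι → R} {k : ι} {a : R} (hck : c' k = c k + a) (hc : ∀ j, j ≠ k → c' j = c j)
    (s : Finset ι) :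
    ∏ j ∈ s, c' j - ∏ j ∈ s, c j = if k ∈ s then a * ∏ j ∈ s.erase k, c j else 0 := by
  have h_erase : ∏ j ∈ s.erase k, c' j = ∏ j ∈ s.erase k, c j :=
    prod_congr rfl fun j hj => hc j (ne_of_mem_erase hj)
  split_ifs with hk
  · rw [← mul_prod_erase s c' hk, ← mul_prod_erase s c hk, h_erase, hck]
    ring
  · rw [sub_eq_zero]
    exact prod_congr rfl fun j hj => hc j (ne_of_mem_of_not_mem hj hk)

theorem summable_pow_div_factorial_mul_prod {c : ℕ → ℝ} {C : ℝ} (hc : ∀ j, |c j| ≤ C)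
    (t : ℝ) : Summable fun ν : ℕ => t ^ ν / (ν ! : ℝ) * ∏ j ∈ Icc 1 ν, c j := by
  have hC : 0 ≤ C := (abs_nonneg _).trans (hc 0)
  refine (Real.summable_pow_div_factorial (|t| * C)).of_norm_bounded fun ν => ?_
  have h_prod : ∏ j ∈ Icc 1 ν, |c j| ≤ C ^ ν :=
    calc ∏ j ∈ Icc 1 ν, |c j| ≤ ∏ _j ∈ Icc 1 ν, C :=
          prod_le_prod (fun j _ => abs_nonneg _) fun j _ => hc j
      _ = C ^ ν := by simp
  calc ‖t ^ ν / (ν ! : ℝ) * ∏ j ∈ Icc 1 ν, c j‖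
      = |t| ^ ν / ν ! * ∏ j ∈ Icc 1 ν, |c j| := by
        simp only [Real.norm_eq_abs, abs_mul, abs_div, abs_pow, abs_prod, Nat.abs_cast]
    _ ≤ |t| ^ ν / ν ! * C ^ ν := by gcongr
    _ = (|t| * C) ^ ν / ν ! := by ring

theorem abs_ΛOf_le {α : ℕ → ℝ} {Lk : ℕ → ℕ} {L j : ℕ} (h : Lk j ≤ L) :
    |ΛOf α Lk j| ≤ ∑ ℓ ∈ range L, |α ℓ| :=
  (abs_sum_le_sum_abs _ _).trans <|
    sum_le_sum_of_subset_of_nonneg (range_subset_range.2 h) fun ℓ _ _ => abs_nonneg (α ℓ)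

theorem summable_sVec_term {α : ℕ → ℝ} {Lk : ℕ → ℕ} {L : ℕ} (hbound : ∀ j, Lk j ≤ L) (t : ℝ) :
    Summable fun ν : ℕ => t ^ ν / (ν ! : ℝ) * ∏ j ∈ Icc 1 ν, ΛOf α Lk j :=
  summable_pow_div_factorial_mul_prod (fun j => abs_ΛOf_le (hbound j)) t

theorem sVec_sub_sVec {α : ℕ → ℝ} {Lk Lk' : ℕ → ℕ} {L : ℕ}
    (hbound : ∀ j, Lk j ≤ L) (hbound' : ∀ j, Lk' j ≤ L) (t : ℝ) :
    sVec α Lk' t - sVec α Lk t = ∑' ν : ℕ, t ^ ν / (ν ! : ℝ) *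
      (∏ j ∈ Icc 1 ν, ΛOf α Lk' j - ∏ j ∈ Icc 1 ν, ΛOf α Lk j) := by
  simp only [sVec, mul_sub]
  exact ((summable_sVec_term hbound' t).tsum_sub (summable_sVec_term hbound t)).symm

theorem ΛOf_eq_add_of_eq_succ {α : ℕ → ℝ} {Lk Lk' : ℕ → ℕ} {k : ℕ} (hk' : Lk' k = Lk k + 1) :
    ΛOf α Lk' k = ΛOf α Lk k + α (Lk k) := by
  rw [ΛOf, ΛOf, hk', sum_range_succ]

theorem tsum_nat_add_eq_tsum_of_eq_zero_of_lt {M : Type*} [AddCommMonoid M] [TopologicalSpace M]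
    {f : ℕ → M} {k : ℕ} (hf : ∀ ν < k, f ν = 0) : ∑' m, f (k + m) = ∑' ν, f ν := by
  refine (add_right_injective k).tsum_eq fun ν hν => ⟨ν - k, ?_⟩
  have : k ≤ ν := not_lt.1 fun h => hν (hf ν h)
  simp only [Nat.add_sub_cancel' this]

theorem greedy_insertion_gain_general (L : ℕ) (α : ℕ → ℝ)
    (k : ℕ) (hk : 1 ≤ k) (Lk Lk' : ℕ → ℕ)
    (hbound : ∀ j, Lk j ≤ L) (hbound' : ∀ j, Lk' j ≤ L)
    (hk' : Lk' k = Lk k + 1) (hother : ∀ j, j ≠ k → Lk' j = Lk j)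
    (t : ℝ) :
    sVec α Lk' t - sVec α Lk t =
      ∑' m : ℕ, t ^ (k + m) / (Nat.factorial (k + m) : ℝ) * α (Lk k) *
        ∏ j ∈ (Finset.Icc 1 (k + m)).erase k, ΛOf α Lk j := by
  have h_diff := prod_sub_prod_of_eq_add (c := ΛOf α Lk) (c' := ΛOf α Lk')
    (ΛOf_eq_add_of_eq_succ hk') fun j hj => by rw [ΛOf, ΛOf, hother j hj]
  rw [sVec_sub_sVec hbound hbound', ← tsum_nat_add_eq_tsum_of_eq_zero_of_lt (k := k)]
  · refine tsum_congr fun m => ?_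
    rw [h_diff, if_pos (mem_Icc.2 ⟨hk, k.le_add_right m⟩), mul_assoc]
  · intro ν hν
    rw [h_diff, if_neg fun h => hν.not_ge (mem_Icc.1 h).2, mul_zero]

/-- **Greedy insertion criterion.** If `\vec L'` is obtained from `\vec L` by including one
additional term at order `k ≥ 1` (i.e. `L'_k = L_k + 1` and `L'_j = L_j` for `j ≠ k`, all
bounded by `L`), then for every `t ≥ 0`,
`s_{\vec L'}(t) − s_{\vec L}(t) = Σ_{ν=k}^∞ (t^ν/ν!) · α_{L_k} · ∏_{j=1, j≠k}^ν Λ_j`. -/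
theorem greedy_insertion_gain (L : ℕ) (α : ℕ → ℝ) (hα : ∀ ℓ, 0 ≤ α ℓ)
    (k : ℕ) (hk : 1 ≤ k) (Lk Lk' : ℕ → ℕ)
    (hbound : ∀ j, Lk j ≤ L) (hbound' : ∀ j, Lk' j ≤ L)
    (hk' : Lk' k = Lk k + 1) (hother : ∀ j, j ≠ k → Lk' j = Lk j)
    (t : ℝ) (ht : 0 ≤ t) :
    sVec α Lk' t - sVec α Lk t =
      ∑' m : ℕ, t ^ (k + m) / (Nat.factorial (k + m) : ℝ) * α (Lk k) *
        ∏ j ∈ (Finset.Icc 1 (k + m)).erase k, ΛOf α Lk j :=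
  greedy_insertion_gain_general L α k hk Lk Lk' hbound hbound' hk' hother t
end

section
/- Let U be a unitary d×d complex matrix, let Ũ be any d×d complex matrix, and let s > 0. Then (3/s)Ũ − (4/s³)Ũ Ũ* Ũ − U = a·U + b·Δ + c·UΔ*U + c·(ΔΔ*U + ΔU*Δ + UΔ*Δ + ΔΔ*Δ), where Δ = Ũ − U, a = (3s² − 4 − s³)/s³ = −(s+1)(s−2)²/s³, b = (3s² − 8)/s³, and c = −4/s³. -/
/-!
Write `Ũ = U + Δ`. Expanding `ŨŨ*Ũ` and using `UU* = U*U = 1` leaves `U + 2Δ + UΔ*U` plus the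
terms of degree at least two in `Δ`; collecting coefficients of `U`, `Δ`, `UΔ*U` and the
higher-order part gives `a`, `b` and `c`.
-/

open Matrix

theorem Unitary.add_mul_star_add_mul_add {R : Type*} [Ring R] [StarRing R] {U : R}
    (hU : U ∈ unitary R) (Δ : R) :
    (U + Δ) * star (U + Δ) * (U + Δ) =
      U + 2 • Δ + U * star Δ * U +
        (Δ * star Δ * U + Δ * star U * Δ + U * star Δ * Δ + Δ * star Δ * Δ) := by
  have hUU : U * star U * U = U := by rw [Unitary.mul_star_self_of_mem hU, one_mul]
  have hU_Δ : U * star U * Δ = Δ := by rw [Unitary.mul_star_self_of_mem hU, one_mul]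
  have hΔ_U : Δ * star U * U = Δ := by
    rw [mul_assoc, Unitary.star_mul_self_of_mem hU, mul_one]
  simp only [star_add, add_mul, mul_add, hUU, hU_Δ, hΔ_U]
  noncomm_ring

/-- **Exact expansion of the effective amplified operator around the target unitary.**
For `U` unitary, `Ũ` arbitrary, `s > 0`, `Δ = Ũ − U`,
`a = (3s² − 4 − s³)/s³`, `b = (3s² − 8)/s³`, `c = −4/s³`, one has
`(3/s)Ũ − (4/s³)ŨŨ*Ũ − U = aU + bΔ + cUΔ*U + c(ΔΔ*U + ΔU*Δ + UΔ*Δ + ΔΔ*Δ)`,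
and moreover `a = −(s+1)(s−2)²/s³`. -/
theorem amplified_operator_expansion (d : ℕ) (U Ut : Matrix (Fin d) (Fin d) ℂ)
    (hU : U ∈ Matrix.unitaryGroup (Fin d) ℂ) (s : ℝ) (hs : 0 < s) :
    (((3 / s : ℝ) : ℂ) • Ut - ((4 / s ^ 3 : ℝ) : ℂ) • (Ut * Utᴴ * Ut) - U =
      (((3 * s ^ 2 - 4 - s ^ 3) / s ^ 3 : ℝ) : ℂ) • U +
        (((3 * s ^ 2 - 8) / s ^ 3 : ℝ) : ℂ) • (Ut - U) +
        ((-4 / s ^ 3 : ℝ) : ℂ) • (U * (Ut - U)ᴴ * U) +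
        ((-4 / s ^ 3 : ℝ) : ℂ) •
          ((Ut - U) * (Ut - U)ᴴ * U + (Ut - U) * Uᴴ * (Ut - U) +
            U * (Ut - U)ᴴ * (Ut - U) + (Ut - U) * (Ut - U)ᴴ * (Ut - U))) ∧
    (3 * s ^ 2 - 4 - s ^ 3) / s ^ 3 = -((s + 1) * (s - 2) ^ 2) / s ^ 3 := by
  refine ⟨?_, by ring⟩
  have hs₀ : (s : ℂ) ≠ 0 := Complex.ofReal_ne_zero.mpr hs.ne'
  obtain ⟨Δ, rfl⟩ : ∃ Δ, Ut = U + Δ := ⟨Ut - U, by abel⟩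
  have hcube := Unitary.add_mul_star_add_mul_add hU Δ
  simp only [star_eq_conjTranspose] at hcube
  rw [hcube, add_sub_cancel_left]
  match_scalars <;> field_simp
  ring
end
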